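/- Let T1 and T2 be finite sets of TGDs and ΣD, ΣQ schemas. Then T2 is ΣD,ΣQ-CQ-conservative over T1 (T1 ⊨^CQ_{ΣD,ΣQ} T2) if and only if chase_{T2}(D) →^lim_{ΣQ} chase_{T1}(D) for every ΣD-database D. -/

import Mathlib

/-! If a CQ has an answer on `chase T2 D`, its match lands in a finite part of that instance; a
database-preserving homomorphism of this part into `chase T1 D` carries the match along and fixes
the answer, which consists of constants of `D`. Conversely, a finite part of `chase T2 D` (in the
query schema) read as a CQ, with its terms as variables and its constants as answer variables, is
answered on `chase T2 D` by the identity. Conservativity gives a match into `chase T1 D` fixing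
those constants, which is the required homomorphism. The part is finite because the chase only
uses the relation symbols of `D` and of the TGD heads, and its constants lie in `D` because the
chase invents no constants. -/
set_option autoImplicit false

/-! ### Terms: constants from 𝐂 (coded `Term.const n`) and nulls from 𝐍 (coded `Term.null n`) -/

inductive Term : Type
  | const : ℕ → Term
  | null  : ℕ → Term
deriving DecidableEq

def Term.isConst : Term → Prop
  | .const _ => True
  | .null _  => False

def termEquiv : Term ≃ ℕ ⊕ ℕ where
  toFun t := match t with
    | .const n => Sum.inl n
    | .null n  => Sum.inr n
  invFun x := match x with
    | Sum.inl n => .const n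
    | Sum.inr n => .null n
  left_inv t := by cases t <;> rfl
  right_inv x := by cases x <;> rfl

instance : Primcodable Term := Primcodable.ofEquiv _ termEquiv

/-! ### Relation symbols (with arity) and schemas -/

structure RelSym : Type where
  name : ℕ
  arity : ℕ
deriving DecidableEq

def relSymEquiv : RelSym ≃ ℕ × ℕ where
  toFun r := (r.name, r.arity)
  invFun p := ⟨p.1, p.2⟩
  left_inv r := rfl
  right_inv p := rfl

instance : Primcodable RelSym := Primcodable.ofEquiv _ relSymEquiv

/-- A schema is a set of relation symbols. -/
abbrev Schema := Set RelSym

/-! ### Facts, instances, databases -/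

structure Fct : Type where
  rel : RelSym
  args : List Term
deriving DecidableEq

def fctEquiv : Fct ≃ RelSym × List Term where
  toFun f := (f.rel, f.args)
  invFun p := ⟨p.1, p.2⟩
  left_inv f := rfl
  right_inv p := rfl

instance : Primcodable Fct := Primcodable.ofEquiv _ fctEquiv

/-- A fact is well-formed if its argument tuple matches the arity of its relation symbol
(arities are ≥ 1). -/
def Fct.wf (f : Fct) : Prop := f.args.length = f.rel.arity ∧ 1 ≤ f.rel.arity

/-- An instance is a (possibly infinite) set of facts. -/
abbrev Inst := Set Fct

/-- The active domain of an instance. -/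
def adom (I : Inst) : Set Term := { t | ∃ f ∈ I, t ∈ f.args }

/-- A database: a finite instance of well-formed facts using only constants from 𝐂. -/
def IsDB (I : Inst) : Prop :=
  I.Finite ∧ ∀ f ∈ I, f.wf ∧ ∀ t ∈ f.args, t.isConst

/-- `I` is a Σ-instance. -/
def InstOver (I : Inst) (S : Schema) : Prop := ∀ f ∈ I, f.rel ∈ S ∧ f.wf

/-- `I` is a Σ-database. -/
def IsDatabase (I : Inst) (S : Schema) : Prop := IsDB I ∧ ∀ f ∈ I, f.rel ∈ S

/-! ### Homomorphisms -/

def Fct.map (h : Term → Term) (f : Fct) : Fct := ⟨f.rel, f.args.map h⟩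

/-- `h` is a Σ-homomorphism from `I` to `J`. -/
def IsHomOn (S : Schema) (h : Term → Term) (I J : Inst) : Prop :=
  ∀ f ∈ I, f.rel ∈ S → f.map h ∈ J

/-- `h` is a homomorphism from `I` to `J` (all relation symbols). -/
def IsFullHom (h : Term → Term) (I J : Inst) : Prop := ∀ f ∈ I, f.map h ∈ J

/-- `h` is database-preserving: it is the identity on all constants from 𝐂. -/
def DBPres (h : Term → Term) : Prop := ∀ n : ℕ, h (Term.const n) = Term.const n

/-- `I →_Σ J`: there is a database-preserving Σ-homomorphism from `I` to `J`. -/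
def HomTo (S : Schema) (I J : Inst) : Prop := ∃ h, DBPres h ∧ IsHomOn S h I J

/-- The induced subinstance of `I` on a set `A` of terms. -/
def restrict (I : Inst) (A : Set Term) : Inst := { f | f ∈ I ∧ ∀ t ∈ f.args, t ∈ A }

/-- `I →ⁿ_Σ J`: every induced subinstance of `I` with at most `n` active-domain elements
admits a database-preserving Σ-homomorphism to `J`. -/
def HomN (S : Schema) (n : ℕ) (I J : Inst) : Prop :=
  ∀ A : Set Term, A ⊆ adom I → A.Finite → A.ncard ≤ n → HomTo S (restrict I A) J

/-- `I →^lim_Σ J`. -/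
def HomLim (S : Schema) (I J : Inst) : Prop := ∀ n : ℕ, 1 ≤ n → HomN S n I J

/-- Homomorphic equivalence of instances. -/
def HomEquiv (I J : Inst) : Prop := (∃ h, IsFullHom h I J) ∧ (∃ h, IsFullHom h J I)

/-! ### Gaifman graph and connectedness -/

def coOccur (I : Inst) (a b : Term) : Prop := ∃ f ∈ I, a ∈ f.args ∧ b ∈ f.args

/-- The Gaifman graph of `I` is connected. -/
def Connected (I : Inst) : Prop :=
  ∀ a ∈ adom I, ∀ b ∈ adom I, Relation.ReflTransGen (coOccur I) a b

/-- Restriction `I|_Σ` of `I` to the facts using a relation symbol from Σ. -/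
def restrS (I : Inst) (S : Schema) : Inst := { f | f ∈ I ∧ f.rel ∈ S }

/-- `I` is Σ-connected. -/
def SConnected (S : Schema) (I : Inst) : Prop := Connected (restrS I S)

/-- `C` is a maximally Σ-connected component of `I`. -/
def MaxConnComp (S : Schema) (I C : Inst) : Prop :=
  C ⊆ restrS I S ∧ Connected C ∧
    ∀ C', C ⊆ C' → C' ⊆ restrS I S → Connected C' → C' = C

/-! ### Conjunctive queries -/

structure Atom : Type where
  rel : RelSym
  args : List ℕ
deriving DecidableEq

def atomEquiv : Atom ≃ RelSym × List ℕ where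
  toFun a := (a.rel, a.args)
  invFun p := ⟨p.1, p.2⟩
  left_inv a := rfl
  right_inv p := rfl

instance : Primcodable Atom := Primcodable.ofEquiv _ atomEquiv

def Atom.wf (a : Atom) : Prop := a.args.length = a.rel.arity ∧ 1 ≤ a.rel.arity

/-- Instantiate an atom by an assignment of terms to variables. -/
def Atom.inst (h : ℕ → Term) (a : Atom) : Fct := ⟨a.rel, a.args.map h⟩

/-- A conjunctive query: a finite set of relational atoms (as a list) together with a
tuple of answer variables. -/
structure CQ : Type where
  atoms : List Atom
  ans : List ℕ
deriving DecidableEq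

def cqEquiv : CQ ≃ List Atom × List ℕ where
  toFun q := (q.atoms, q.ans)
  invFun p := ⟨p.1, p.2⟩
  left_inv q := rfl
  right_inv p := rfl

instance : Primcodable CQ := Primcodable.ofEquiv _ cqEquiv

/-- `q` is a CQ over schema Σ. -/
def CQ.Over (q : CQ) (S : Schema) : Prop := ∀ a ∈ q.atoms, a.rel ∈ S ∧ a.wf

/-- A homomorphism from `q` to `I`. -/
def CQHom (q : CQ) (I : Inst) (h : ℕ → Term) : Prop := ∀ a ∈ q.atoms, a.inst h ∈ I

/-- `c̄` is an answer to `q` on `I`. -/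
def IsAnswer (q : CQ) (I : Inst) (c : List Term) : Prop :=
  (∀ x ∈ c, x ∈ adom I) ∧ ∃ h, CQHom q I h ∧ q.ans.map h = c

/-- The canonical database of a CQ (variables viewed as constants/nulls). -/
def canonDB (q : CQ) : Inst := { f | ∃ a ∈ q.atoms, f = a.inst Term.null }

/-! ### Tuple-generating dependencies -/

/-- A TGD `∀x̄∀ȳ (φ(x̄,ȳ) → ∃z̄ ψ(x̄,z̄))`, with `frontier` the tuple `x̄` of
frontier variables. -/
structure TGD : Type where
  body : List Atom
  head : List Atom
  frontier : List ℕ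
deriving DecidableEq

def tgdEquiv : TGD ≃ List Atom × List Atom × List ℕ where
  toFun t := (t.body, t.head, t.frontier)
  invFun p := ⟨p.1, p.2.1, p.2.2⟩
  left_inv t := rfl
  right_inv p := rfl

instance : Primcodable TGD := Primcodable.ofEquiv _ tgdEquiv

def TGD.bodyVars (t : TGD) : Set ℕ := { x | ∃ a ∈ t.body, x ∈ a.args }
def TGD.headVars (t : TGD) : Set ℕ := { x | ∃ a ∈ t.head, x ∈ a.args }

/-- Well-formedness of a TGD: atoms are well-formed, the frontier variables are distinct
body variables, and every variable shared by body and head is a frontier variable. -/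
def TGD.wf (t : TGD) : Prop :=
  (∀ a ∈ t.body, a.wf) ∧ (∀ a ∈ t.head, a.wf) ∧ t.frontier.Nodup ∧
  (∀ x ∈ t.frontier, x ∈ t.bodyVars) ∧
  (∀ x, x ∈ t.bodyVars → x ∈ t.headVars → x ∈ t.frontier)

/-- A TGD is linear if its body contains at most one atom. -/
def TGD.Linear (t : TGD) : Prop := t.body.length ≤ 1

/-- A TGD is guarded if some body atom contains all body variables. -/
def TGD.Guarded (t : TGD) : Prop := ∃ a ∈ t.body, ∀ x, x ∈ t.bodyVars → x ∈ a.args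

/-- A TGD is frontier-one if it has exactly one frontier variable. -/
def TGD.FrontierOne (t : TGD) : Prop := t.frontier.length = 1

/-- `I ⊨ ϑ`. -/
def TGD.Satisfies (I : Inst) (t : TGD) : Prop :=
  ∀ g : ℕ → Term, (∀ a ∈ t.body, a.inst g ∈ I) →
    ∃ h : ℕ → Term, (∀ a ∈ t.head, a.inst h ∈ I) ∧ ∀ x ∈ t.frontier, h x = g x

/-- `I` is a model of the set `T` of TGDs. -/
def IsModel (I : Inst) (T : List TGD) : Prop := ∀ t ∈ T, TGD.Satisfies I t

/-- Number of (distinct) variables in the body of a TGD. -/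
def TGD.bodyVarList (t : TGD) : List ℕ := ((t.body.map Atom.args).flatten).dedup

/-- The body width of a set of TGDs. -/
def bodyWidth (T : List TGD) : ℕ := (T.map (fun t => t.bodyVarList.length)).foldr max 0

/-! ### The chase -/

/-- `ϑ` is applicable at tuple `c̄` in `I`. -/
def TGD.Applicable (t : TGD) (I : Inst) (c : List Term) : Prop :=
  (∃ g : ℕ → Term, (∀ a ∈ t.body, a.inst g ∈ I) ∧ t.frontier.map g = c) ∧
  ¬ (∃ h : ℕ → Term, (∀ a ∈ t.head, a.inst h ∈ I) ∧ t.frontier.map h = c)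

/-- `J` is the result of applying `ϑ` in `I` at `c̄`: the head is added, with the
existential variables replaced by distinct fresh nulls. -/
def TGD.StepResult (t : TGD) (I : Inst) (c : List Term) (J : Inst) : Prop :=
  ∃ h : ℕ → Term,
    t.frontier.map h = c ∧
    (∀ x, x ∈ t.headVars → x ∉ t.frontier → (¬ (h x).isConst ∧ h x ∉ adom I)) ∧
    (∀ x y, x ∈ t.headVars → y ∈ t.headVars → x ∉ t.frontier → y ∉ t.frontier →
      h x = h y → x = y) ∧
    J = I ∪ { f | ∃ a ∈ t.head, f = a.inst h }

/-- A chase step from `I` to `J` with some TGD of `T`. -/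
def ChaseStep (T : List TGD) (I J : Inst) : Prop :=
  ∃ t ∈ T, ∃ c, t.Applicable I c ∧ t.StepResult I c J

/-- A chase sequence for `I` with `T` (stalling when no TGD is applicable). -/
def IsChaseSeq (T : List TGD) (I : Inst) (f : ℕ → Inst) : Prop :=
  f 0 = I ∧ ∀ i, ChaseStep T (f i) (f (i+1)) ∨ ((¬ ∃ J, ChaseStep T (f i) J) ∧ f (i+1) = f i)

/-- Fairness: every applicable TGD application is eventually performed or becomes
non-applicable. -/
def IsFair (T : List TGD) (f : ℕ → Inst) : Prop :=
  ∀ i, ∀ t ∈ T, ∀ c, TGD.Applicable t (f i) c →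
    ∃ j, i ≤ j ∧
      ((TGD.Applicable t (f j) c ∧ TGD.StepResult t (f j) c (f (j+1))) ∨
        ¬ TGD.Applicable t (f j) c)

/-- `J` is the result of some fair chase sequence for `I` with `T`. -/
def IsChaseResult (T : List TGD) (I J : Inst) : Prop :=
  ∃ f : ℕ → Inst, IsChaseSeq T I f ∧ IsFair T f ∧ J = ⋃ i, f i

/-- `chase T I`: the result of an arbitrary but fixed fair chase sequence for `I` with `T`. -/
noncomputable def chase (T : List TGD) (I : Inst) : Inst :=
  @dite _ (∃ J, IsChaseResult T I J) (Classical.dec _) (fun h => h.choose) (fun _ => I)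

/-! ### Query answering w.r.t. TGDs and conservativity notions -/

/-- `c̄ ∈ q_T(D)`: `c̄` is a tuple over `adom D` and an answer to `q` on `chase T D`. -/
def AnswerWrt (q : CQ) (T : List TGD) (D : Inst) (c : List Term) : Prop :=
  (∀ x ∈ c, x ∈ adom D) ∧ ∃ h, CQHom q (chase T D) h ∧ q.ans.map h = c

/-- `T2` is `ΣD,ΣQ`-hom-conservative over `T1`. -/
def HomConservative (T1 T2 : List TGD) (SD SQ : Schema) : Prop :=
  ∀ D, IsDatabase D SD → HomTo SQ (chase T2 D) (chase T1 D)

/-- `T2` is `ΣD,ΣQ`-CQ-conservative over `T1`. -/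
def CQConservative (T1 T2 : List TGD) (SD SQ : Schema) : Prop :=
  ∀ D, IsDatabase D SD → ∀ q : CQ, CQ.Over q SQ →
    ∀ c, AnswerWrt q T2 D c → AnswerWrt q T1 D c

/-- `T` is `ΣD,ΣQ`-hom-trivial. -/
def HomTrivial (T : List TGD) (SD SQ : Schema) : Prop :=
  ∀ D, IsDatabase D SD → HomTo SQ (chase T D) D

/-- `T` is `ΣD,ΣQ`-CQ-trivial. -/
def CQTrivial (T : List TGD) (SD SQ : Schema) : Prop :=
  ∀ D, IsDatabase D SD → ∀ q : CQ, CQ.Over q SQ →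
    ∀ c, AnswerWrt q T D c → IsAnswer q D c

instance : DecidablePred Term.isConst
  | .const _ => isTrue trivial
  | .null _ => isFalse id

theorem Term.isConst_iff {t : Term} : t.isConst ↔ ∃ n, t = .const n := by
  cases t <;> simp [Term.isConst]

theorem DBPres.apply_eq_self {h : Term → Term} (hh : DBPres h) {t : Term} (ht : t.isConst) :
    h t = t := by
  obtain ⟨n, rfl⟩ := Term.isConst_iff.mp ht
  exact hh n

theorem DBPres.map_eq_self {h : Term → Term} (hh : DBPres h) {c : List Term}
    (hc : ∀ t ∈ c, t.isConst) : c.map h = c :=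
  (List.map_congr_left fun t ht => hh.apply_eq_self (hc t ht)).trans (List.map_id c)

theorem IsDB.isConst_of_mem_adom {D : Inst} (hD : IsDB D) {t : Term} (ht : t ∈ adom D) :
    t.isConst := by
  obtain ⟨f, hf, htf⟩ := ht
  exact (hD.2 f hf).2 t htf

theorem Fct.map_congr {f : Fct} {g h : Term → Term} (hgh : ∀ t ∈ f.args, g t = h t) :
    f.map g = f.map h := by
  simp only [Fct.map, List.map_inj_left.mpr hgh]

theorem Atom.wf_inst {a : Atom} (ha : a.wf) (h : ℕ → Term) : (a.inst h).wf := by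
  simpa [Fct.wf, Atom.inst, Atom.wf] using ha

theorem chase_induction {T : List TGD} {I : Inst} {P : Fct → Prop} (hI : ∀ f ∈ I, P f)
    (hstep : ∀ J J', ChaseStep T J J' → (∀ f ∈ J, P f) → ∀ f ∈ J', P f) :
    ∀ f ∈ chase T I, P f := by
  unfold chase
  split
  case isFalse => exact hI
  case isTrue hex =>
    obtain ⟨seq, ⟨hseq0, hseq⟩, -, hJ⟩ := hex.choose_spec
    have hseqP : ∀ i, ∀ f ∈ seq i, P f := by
      intro i
      induction i with
      | zero => rwa [hseq0]
      | succ i ih =>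
        rcases hseq i with hcs | ⟨-, heq⟩
        · exact hstep _ _ hcs ih
        · rwa [heq]
    rw [hJ]
    intro f hf
    obtain ⟨i, hfi⟩ := Set.mem_iUnion.mp hf
    exact hseqP i f hfi

theorem mem_chase_cases {T : List TGD} {D : Inst} {f : Fct} (hf : f ∈ chase T D) :
    f ∈ D ∨ ∃ t ∈ T, ∃ a ∈ t.head, ∃ h, f = a.inst h := by
  refine chase_induction (P := fun f => f ∈ D ∨ ∃ t ∈ T, ∃ a ∈ t.head, ∃ h, f = a.inst h)
    (fun f hf => Or.inl hf) ?_ f hf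
  rintro J J' ⟨t, ht, c, -, h, -, -, -, rfl⟩ hJ f (hf | ⟨a, ha, rfl⟩)
  · exact hJ f hf
  · exact Or.inr ⟨t, ht, a, ha, h, rfl⟩

theorem wf_of_mem_chase {T : List TGD} {D : Inst} (hT : ∀ t ∈ T, t.wf) (hD : IsDB D)
    {f : Fct} (hf : f ∈ chase T D) : f.wf := by
  rcases mem_chase_cases hf with hfD | ⟨t, ht, a, ha, h, rfl⟩
  · exact (hD.2 f hfD).1
  · exact Atom.wf_inst ((hT t ht).2.1 a ha) h

theorem finite_rel_image_chase {T : List TGD} {D : Inst} (hD : D.Finite) :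
    (Fct.rel '' chase T D).Finite := by
  refine ((hD.image Fct.rel).union
    (T.finite_toSet.biUnion fun t _ => t.head.finite_toSet.image Atom.rel)).subset ?_
  rintro _ ⟨f, hf, rfl⟩
  rcases mem_chase_cases hf with hfD | ⟨t, ht, a, ha, h, rfl⟩
  · exact Or.inl ⟨f, hfD, rfl⟩
  · exact Or.inr (Set.mem_biUnion ht ⟨a, ha, rfl⟩)

/-- Chasing never invents constants: frontier variables are body variables, and all other
head variables become fresh nulls. -/
theorem mem_adom_of_mem_chase {T : List TGD} {D : Inst} (hT : ∀ t ∈ T, t.wf)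
    {f : Fct} (hf : f ∈ chase T D) {u : Term} (hu : u ∈ f.args) (hc : u.isConst) :
    u ∈ adom D := by
  refine chase_induction (P := fun f => ∀ u ∈ f.args, u.isConst → u ∈ adom D)
    (fun f hf u hu _ => ⟨f, hf, hu⟩) ?_ f hf u hu hc
  rintro J J' ⟨t, ht, c, ⟨⟨g, hg, rfl⟩, -⟩, h, hhg, hfresh, -, rfl⟩ hJ f (hf | ⟨a, ha, rfl⟩)
  · exact hJ f hf
  intro u hu hc
  obtain ⟨x, hx, rfl⟩ := List.mem_map.mp hu
  by_cases hxf : x ∈ t.frontier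
  · obtain ⟨b, hb, hxb⟩ := (hT t ht).2.2.2.1 x hxf
    rw [List.map_inj_left.mp hhg x hxf] at hc ⊢
    exact hJ _ (hg b hb) (g x) (List.mem_map_of_mem hxb) hc
  · exact absurd hc (hfresh x ⟨a, ha, hx⟩ hxf).1

theorem finite_restrict {I : Inst} (hwf : ∀ f ∈ I, f.wf) (hrel : (Fct.rel '' I).Finite)
    {A : Set Term} (hA : A.Finite) : (restrict I A).Finite := by
  have : Finite A := hA.to_subtype
  have hlists : ∀ n, {l : List Term | l.length = n ∧ ∀ t ∈ l, t ∈ A}.Finite := fun n =>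
    ((List.finite_length_eq A n).image (List.map Subtype.val)).subset fun l ⟨hl, hlA⟩ => by
      lift l to List A using hlA
      exact ⟨l, by simpa using hl, rfl⟩
  refine (hrel.biUnion fun r _ => (hlists r.arity).image (Fct.mk r)).subset ?_
  rintro f ⟨hf, hfA⟩
  exact Set.mem_biUnion ⟨f, hf, rfl⟩ ⟨f.args, ⟨(hwf f hf).1, hfA⟩, rfl⟩

def Fct.toAtom (f : Fct) : Atom := ⟨f.rel, f.args.map Encodable.encode⟩

theorem Fct.toAtom_inst (h : ℕ → Term) (f : Fct) :
    f.toAtom.inst h = f.map (h ∘ Encodable.encode) := by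
  simp [Fct.toAtom, Atom.inst, Fct.map]

def constsOf (F : List Fct) : List Term := (F.flatMap Fct.args).filter (·.isConst)

theorem mem_constsOf {F : List Fct} {u : Term} :
    u ∈ constsOf F ↔ (∃ f ∈ F, u ∈ f.args) ∧ u.isConst := by
  simp [constsOf]

/-- The canonical query of the facts `F`: each term is the variable that encodes it, and the
constants are the answer variables. -/
def CQ.ofFacts (F : List Fct) : CQ :=
  ⟨F.map Fct.toAtom, (constsOf F).map Encodable.encode⟩

theorem cqHom_ofFacts_iff {F : List Fct} {I : Inst} {h : ℕ → Term} :
    CQHom (CQ.ofFacts F) I h ↔ ∀ f ∈ F, f.map (h ∘ Encodable.encode) ∈ I := by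
  simp [CQHom, CQ.ofFacts, Fct.toAtom_inst]

theorem CQ.ofFacts_over {F : List Fct} {S : Schema} (hF : ∀ f ∈ F, f.rel ∈ S ∧ f.wf) :
    (CQ.ofFacts F).Over S := by
  simp only [CQ.Over, CQ.ofFacts, List.mem_map]
  rintro _ ⟨f, hf, rfl⟩
  exact ⟨(hF f hf).1, by simpa [Fct.toAtom, Atom.wf, Fct.wf] using (hF f hf).2⟩

def decodeTerm (m : ℕ) : Term := (Encodable.decode m).getD (.const 0)

theorem decodeTerm_comp_encode : decodeTerm ∘ Encodable.encode = id := by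
  funext t
  simp [decodeTerm, Encodable.encodek]

theorem cqHom_ofFacts_decodeTerm {F : List Fct} {I : Inst} (hF : ∀ f ∈ F, f ∈ I) :
    CQHom (CQ.ofFacts F) I decodeTerm ∧ (CQ.ofFacts F).ans.map decodeTerm = constsOf F := by
  refine ⟨cqHom_ofFacts_iff.mpr fun f hf => ?_, ?_⟩
  · simpa [decodeTerm_comp_encode, Fct.map] using hF f hf
  · simp [CQ.ofFacts, decodeTerm_comp_encode]

/-- The constants of `F` are fixed by `h` because they are answer variables; all other constants
are fixed by hand. -/
theorem exists_dbPres_hom_of_cqHom_ofFacts {F : List Fct} {J : Inst} {h : ℕ → Term}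
    (hh : CQHom (CQ.ofFacts F) J h) (hans : (CQ.ofFacts F).ans.map h = constsOf F) :
    ∃ g, DBPres g ∧ ∀ f ∈ F, f.map g ∈ J := by
  have hfix : ∀ u ∈ constsOf F, h (Encodable.encode u) = u := by
    simp only [CQ.ofFacts, List.map_map] at hans
    exact List.map_inj_left.mp (hans.trans (List.map_id _).symm)
  refine ⟨fun u => if u.isConst then u else h (Encodable.encode u), fun n => if_pos trivial,
    fun f hf => ?_⟩
  rw [Fct.map_congr (h := h ∘ Encodable.encode) fun u hu => ?_]
  · exact cqHom_ofFacts_iff.mp hh f hf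
  · by_cases hc : u.isConst
    · rw [if_pos hc, Function.comp_apply, hfix u (mem_constsOf.mpr ⟨⟨f, hf, hu⟩, hc⟩)]
    · exact if_neg hc

theorem homTo_restrict_of_cqConservative {T1 T2 : List TGD} {SD SQ : Schema}
    (h2 : ∀ t ∈ T2, t.wf) (hcons : CQConservative T1 T2 SD SQ) {D : Inst}
    (hD : IsDatabase D SD) {A : Set Term} (hA : A.Finite) :
    HomTo SQ (restrict (chase T2 D) A) (chase T1 D) := by
  have hfin : (restrS (restrict (chase T2 D) A) SQ).Finite :=
    (finite_restrict (fun f hf => wf_of_mem_chase h2 hD.1 hf)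
      (finite_rel_image_chase hD.1.1) hA).subset fun f hf => hf.1
  set F := hfin.toFinset.toList
  have hF : ∀ f, f ∈ F ↔ f ∈ restrS (restrict (chase T2 D) A) SQ := by simp [F]
  have hanswer : AnswerWrt (CQ.ofFacts F) T2 D (constsOf F) := by
    refine ⟨fun u hu => ?_, decodeTerm, cqHom_ofFacts_decodeTerm fun f hf => ((hF f).mp hf).1.1⟩
    obtain ⟨⟨f, hf, hu⟩, hc⟩ := mem_constsOf.mp hu
    exact mem_adom_of_mem_chase h2 ((hF f).mp hf).1.1 hu hc
  have hover : (CQ.ofFacts F).Over SQ := CQ.ofFacts_over fun f hf =>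
    ⟨((hF f).mp hf).2, wf_of_mem_chase h2 hD.1 ((hF f).mp hf).1.1⟩
  obtain ⟨-, h, hh, hans⟩ := hcons D hD _ hover _ hanswer
  obtain ⟨g, hg, hgF⟩ := exists_dbPres_hom_of_cqHom_ofFacts hh hans
  exact ⟨g, hg, fun f hf hfS => hgF f ((hF f).mpr ⟨hf, hfS⟩)⟩

/-- The match only touches finitely many terms of `I`. -/
theorem HomLim.exists_cqHom {S : Schema} {I J : Inst} (hlim : HomLim S I J) {q : CQ}
    (hq : q.Over S) {h : ℕ → Term} (hh : CQHom q I h) :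
    ∃ g, DBPres g ∧ CQHom q J (g ∘ h) := by
  set A : Set Term := h '' {x | ∃ a ∈ q.atoms, x ∈ a.args}
  have hAfin : A.Finite := by
    refine Set.Finite.image h ((q.atoms.finite_toSet.biUnion fun a _ =>
      a.args.finite_toSet).subset ?_)
    rintro x ⟨a, ha, hx⟩
    exact Set.mem_biUnion ha hx
  have hinst : ∀ a ∈ q.atoms, a.inst h ∈ restrict I A := fun a ha =>
    ⟨hh a ha, fun u hu => by
      obtain ⟨x, hx, rfl⟩ := List.mem_map.mp hu
      exact ⟨x, ⟨a, ha, hx⟩, rfl⟩⟩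
  have hAsub : A ⊆ adom I := by
    rintro _ ⟨x, ⟨a, ha, hx⟩, rfl⟩
    exact ⟨a.inst h, hh a ha, List.mem_map_of_mem hx⟩
  obtain ⟨g, hg, hgA⟩ := hlim (max A.ncard 1) (le_max_right _ _) A hAsub hAfin (le_max_left _ _)
  refine ⟨g, hg, fun a ha => ?_⟩
  simpa [Fct.map, Atom.inst] using hgA _ (hinst a ha) (hq a ha).1

theorem cqConservative_of_homLim {T1 T2 : List TGD} {SD SQ : Schema}
    (hlim : ∀ D : Inst, IsDatabase D SD → HomLim SQ (chase T2 D) (chase T1 D)) :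
    CQConservative T1 T2 SD SQ := by
  rintro D hD q hq c ⟨hc, h, hh, rfl⟩
  obtain ⟨g, hg, hgh⟩ := (hlim D hD).exists_cqHom hq hh
  refine ⟨hc, g ∘ h, hgh, ?_⟩
  rw [← List.map_map, hg.map_eq_self fun u hu => hD.1.isConst_of_mem_adom (hc u hu)]

theorem cq_conservative_iff_homLim_general (T1 T2 : List TGD) (SD SQ : Schema)
    (h2 : ∀ t ∈ T2, t.wf) :
    CQConservative T1 T2 SD SQ ↔
      ∀ D : Inst, IsDatabase D SD → HomLim SQ (chase T2 D) (chase T1 D) :=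
  ⟨fun hcons _D hD _n _ _A _ hA _ => homTo_restrict_of_cqConservative h2 hcons hD hA,
    cqConservative_of_homLim⟩

/-- Theorem 4: `T2` is `ΣD,ΣQ`-CQ-conservative over `T1` iff
`chase_{T2}(D) →^lim_{ΣQ} chase_{T1}(D)` for every `ΣD`-database `D`. -/
theorem cq_conservative_iff_homLim (T1 T2 : List TGD) (SD SQ : Schema)
    (h1 : ∀ t ∈ T1, t.wf) (h2 : ∀ t ∈ T2, t.wf) :
    CQConservative T1 T2 SD SQ ↔
      ∀ D : Inst, IsDatabase D SD → HomLim SQ (chase T2 D) (chase T1 D) :=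
  cq_conservative_iff_homLim_general T1 T2 SD SQ h2
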